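/- Equilibrium implies optimality: suppose the problems (LSE subproblem over (α,β,γ,κ) given prices, and each customer subproblem over (u_i,v_i,w_i) given prices) are convex, and a point satisfies: (i) (α,β,γ,κ) minimizes the LSE subproblem at prices (π,λ,μ); (ii) each (u_i,v_i,w_i) minimizes customer i's subproblem at prices (π_i,λ_i,μ_i); (iii) (α,β,γ) = (u,v,w). Then (α,β,γ,u,v,w,κ) is optimal for the joint decomposed problem. -/
import Mathlib


/-- Equilibrium of the dual decomposition implies optimality for the joint
decomposed problem. -/
theorem stmt17 {N : ℕ}
    (Fcust : Fin N → ℝ → ℝ → ℝ → ℝ)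
    (Flse : (Fin N → ℝ) → (Fin N → ℝ) → (Fin N → ℝ) → ℝ)
    (Ccap : ℝ → ℝ)
    (S : Set (((Fin N → ℝ) × (Fin N → ℝ) × (Fin N → ℝ)) × ℝ))
    (hS : Convex ℝ S)
    (hFcust : ∀ i, ConvexOn ℝ Set.univ
      (fun p : ℝ × ℝ × ℝ => Fcust i p.1 p.2.1 p.2.2))
    (hFlse : ConvexOn ℝ Set.univ
      (fun p : (Fin N → ℝ) × (Fin N → ℝ) × (Fin N → ℝ) => Flse p.1 p.2.1 p.2.2))
    (hCcap : ConvexOn ℝ Set.univ Ccap)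
    (π lam μpr : Fin N → ℝ)
    (α β γ u v w : Fin N → ℝ) (κ : ℝ)
    (hfeas : ((α, β, γ), κ) ∈ S)
    (hLSE : ∀ (α' β' γ' : Fin N → ℝ) (κ' : ℝ), ((α', β', γ'), κ') ∈ S →
      Ccap κ + ∑ i, (π i * α i + lam i * β i + μpr i * γ i) + Flse α β γ
        ≤ Ccap κ' + ∑ i, (π i * α' i + lam i * β' i + μpr i * γ' i) + Flse α' β' γ')
    (hCust : ∀ i, ∀ u' v' w' : ℝ,
      Fcust i (u i) (v i) (w i) - π i * u i - lam i * v i - μpr i * w i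
        ≤ Fcust i u' v' w' - π i * u' - lam i * v' - μpr i * w')
    (heq : u = α ∧ v = β ∧ w = γ) :
    ∀ (α' β' γ' u' v' w' : Fin N → ℝ) (κ' : ℝ),
      ((α', β', γ'), κ') ∈ S → u' = α' → v' = β' → w' = γ' →
      Ccap κ + ∑ i, Fcust i (u i) (v i) (w i) + Flse α β γ
        ≤ Ccap κ' + ∑ i, Fcust i (u' i) (v' i) (w' i) + Flse α' β' γ' := by
  obtain ⟨hu, hv, hw⟩ := heq
  subst hu hv hw
  intro α' β' γ' u' v' w' κ' hS' hu' hv' hw'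
  subst hu' hv' hw'
  have h1 := hLSE u' v' w' κ' hS'
  have h2 : ∑ i, (Fcust i (u i) (v i) (w i)
      - π i * u i - lam i * v i - μpr i * w i)
      ≤ ∑ i, (Fcust i (u' i) (v' i) (w' i)
      - π i * u' i - lam i * v' i - μpr i * w' i) :=
    Finset.sum_le_sum fun i _ => hCust i (u' i) (v' i) (w' i)
  simp only [Finset.sum_sub_distrib, Finset.sum_add_distrib] at h1 h2 ⊢
  linarith
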